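/- With the same notation, for all i,j ∈ {5,6,7,8} with i ≠ j: 2 ∂ᵢ αⱼ = ∂_p α_q − ∂_q α_p, where p,q ∈ {1,2,3,4} are the unique indices such that the permutation (i−4, j−4, p, q) of (1,2,3,4) has sign ε_{i−4,j−4,p,q} = 1. -/

import Mathlib

open scoped TensorProduct
open MvPolynomial

set_option synthInstance.maxHeartbeats 1000000
set_option maxHeartbeats 1000000

noncomputable section

variable (F : Type) [Field F] [CharZero F]

/-- The polynomial part `F[∂₁,…,∂₄]` (even variables). -/
abbrev PolyPart := MvPolynomial (Fin 4) F

/-- The exterior (Grassmann) part `Λ(∂₅,…,∂₈)` on four odd generators. -/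
abbrev ExtPart := ExteriorAlgebra F (Fin 4 → F)

/-- `A = F[∂₁,…,∂₄] ⊗ Λ(∂₅,…,∂₈)` (written with the exterior factor first). -/
abbrev AA := ExtPart F ⊗[F] PolyPart F

/-- The `i`-th odd generator of the exterior part. -/
def gen (i : Fin 4) : ExtPart F := ExteriorAlgebra.ι F (Pi.single i (1 : F))

/-- The generators `∂₁,…,∂₈` of `A` (0-based: `dv 0,…,dv 3` are the even
generators `∂₁,…,∂₄`, and `dv 4,…,dv 7` are the odd generators `∂₅,…,∂₈`). -/
def dv (i : Fin 8) : AA F :=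
  if h : (i : ℕ) < 4 then (1 : ExtPart F) ⊗ₜ[F] (X ⟨i, h⟩ : PolyPart F)
  else (gen F ⟨(i : ℕ) - 4, by omega⟩) ⊗ₜ[F] (1 : PolyPart F)

/-- The elements `ν₁,…,ν₄` (0-based: `nu 0 = ν₁ = ∂₆∂₇∂₈`, etc.). -/
def nu : Fin 4 → AA F
  | 0 => dv F 5 * dv F 6 * dv F 7
  | 1 => -(dv F 4 * dv F 6 * dv F 7)
  | 2 => dv F 4 * dv F 5 * dv F 7
  | 3 => -(dv F 4 * dv F 5 * dv F 6)

/-- `ν` extended to all eight indices by `ν₅ = ⋯ = ν₈ = 0`. -/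
def nu8 (i : Fin 8) : AA F :=
  if h : (i : ℕ) < 4 then nu F ⟨i, h⟩ else 0

/-- the embedding `{1,…,4} → {1,…,8}` , `i ↦ i` (even indices). -/
def ei (i : Fin 4) : Fin 8 := ⟨(i : ℕ), by omega⟩
/-- the embedding `{1,…,4} → {1,…,8}` , `i ↦ i + 4` (odd indices). -/
def oi (i : Fin 4) : Fin 8 := ⟨(i : ℕ) + 4, by omega⟩

/-- The free `A`-module `R = A ⊗ F⁸` on the basis `a₁,…,a₈`, realized as
`Fin 8 → A` with basis the coordinate vectors. -/
abbrev MM := Fin 8 → AA F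

/-- The basis elements `a₁,…,a₈` (0-based). -/
def av (i : Fin 8) : MM F := Pi.single i (1 : AA F)

/-- `B_{∂∂} = Σ_{i=1}^4 ∂ᵢ∂_{i+4}`. -/
def Bdd : AA F := ∑ i : Fin 4, dv F (ei i) * dv F (oi i)

/-- `C_{∂a} = Σ_{i=1}^4 (∂ᵢ a_{i+4} + ∂_{i+4} aᵢ)`. -/
def Cda : MM F := ∑ i : Fin 4, (dv F (ei i) • av F (oi i) + dv F (oi i) • av F (ei i))

/-- `B_{νa} = Σ_{i=1}^4 νᵢ a_{i+4}`. -/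
def Bnua : MM F := ∑ i : Fin 4, nu F i • av F (oi i)

/-- `αᵢ = ∂ᵢ B_{∂∂} C_{∂a} − 2 νᵢ C_{∂a} + ∂ᵢ B_{νa}` for `i = 1,…,8` (0-based). -/
def alph (i : Fin 8) : MM F :=
  (dv F i * Bdd F) • Cda F - (2 : ℤ) • (nu8 F i • Cda F) + dv F i • Bnua F

end
/-- The Levi-Civita symbol `ε_{abcd}` on `{1,2,3,4}` (0-based), computed as the
normalized Vandermonde product (it equals `±1` on permutations and `0` otherwise). -/
def lc (a b c d : Fin 4) : ℤ :=
  (((b : ℤ) - a) * ((c : ℤ) - a) * ((c : ℤ) - b) *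
    ((d : ℤ) - a) * ((d : ℤ) - b) * ((d : ℤ) - c)) / 12

noncomputable section AuxLemmas

set_option linter.unusedSectionVars false

variable (F : Type) [Field F] [CharZero F]

lemma gsq (i : Fin 4) : gen F i * gen F i = 0 := ExteriorAlgebra.ι_sq_zero _

lemma gsq' (i : Fin 4) (x : ExtPart F) : gen F i * (gen F i * x) = 0 := by
  rw [← mul_assoc, gsq, zero_mul]

lemma ganti (i j : Fin 4) : gen F j * gen F i = -(gen F i * gen F j) :=
  eq_neg_of_add_eq_zero_right (ExteriorAlgebra.ι_add_mul_swap _ _)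

lemma ganti' (i j : Fin 4) (x : ExtPart F) :
    gen F j * (gen F i * x) = -(gen F i * (gen F j * x)) := by
  rw [← mul_assoc, ganti, neg_mul, mul_assoc]

lemma g10 : gen F 1 * gen F 0 = -(gen F 0 * gen F 1) := ganti F 0 1
lemma g20 : gen F 2 * gen F 0 = -(gen F 0 * gen F 2) := ganti F 0 2
lemma g21 : gen F 2 * gen F 1 = -(gen F 1 * gen F 2) := ganti F 1 2
lemma g30 : gen F 3 * gen F 0 = -(gen F 0 * gen F 3) := ganti F 0 3
lemma g31 : gen F 3 * gen F 1 = -(gen F 1 * gen F 3) := ganti F 1 3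
lemma g32 : gen F 3 * gen F 2 = -(gen F 2 * gen F 3) := ganti F 2 3
lemma g10' (x) : gen F 1 * (gen F 0 * x) = -(gen F 0 * (gen F 1 * x)) := ganti' F 0 1 x
lemma g20' (x) : gen F 2 * (gen F 0 * x) = -(gen F 0 * (gen F 2 * x)) := ganti' F 0 2 x
lemma g21' (x) : gen F 2 * (gen F 1 * x) = -(gen F 1 * (gen F 2 * x)) := ganti' F 1 2 x
lemma g30' (x) : gen F 3 * (gen F 0 * x) = -(gen F 0 * (gen F 3 * x)) := ganti' F 0 3 x
lemma g31' (x) : gen F 3 * (gen F 1 * x) = -(gen F 1 * (gen F 3 * x)) := ganti' F 1 3 x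
lemma g32' (x) : gen F 3 * (gen F 2 * x) = -(gen F 2 * (gen F 3 * x)) := ganti' F 2 3 x

lemma dv_oi (i : Fin 4) : dv F (oi i) = gen F i ⊗ₜ[F] (1 : PolyPart F) := by
  rw [dv, dif_neg (by simp [oi])]
  exact congrArg (fun t : ExtPart F => t ⊗ₜ[F] (1 : PolyPart F))
    (congrArg (gen F) (Fin.ext (by simp [oi])))

lemma dv_ei (p : Fin 4) : dv F (ei p) = (1 : ExtPart F) ⊗ₜ[F] (X p : PolyPart F) := by
  rw [dv, dif_pos (by simp [ei])]
  rfl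

lemma nu8_oi (i : Fin 4) : nu8 F (oi i) = 0 := by
  rw [nu8, dif_neg (by simp [oi])]

lemma nu8_ei (p : Fin 4) : nu8 F (ei p) = nu F p := by
  rw [nu8, dif_pos (by simp [ei])]
  rfl

lemma Bdd_eq : Bdd F = ∑ k : Fin 4, gen F k ⊗ₜ[F] (X k : PolyPart F) := by
  unfold Bdd
  refine Finset.sum_congr rfl fun k _ => ?_
  rw [dv_ei, dv_oi, Algebra.TensorProduct.tmul_mul_tmul, one_mul, mul_one]

lemma aamul_neg (x y : AA F) : x * -y = -(x * y) := mul_neg x y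
lemma aaneg_mul (x y : AA F) : -x * y = -(x * y) := neg_mul x y
lemma aaneg_neg (x : AA F) : - -x = x := neg_neg x

lemma dv4 : dv F 4 = gen F 0 ⊗ₜ[F] (1 : PolyPart F) := dv_oi F 0
lemma dv5 : dv F 5 = gen F 1 ⊗ₜ[F] (1 : PolyPart F) := dv_oi F 1
lemma dv6 : dv F 6 = gen F 2 ⊗ₜ[F] (1 : PolyPart F) := dv_oi F 2
lemma dv7 : dv F 7 = gen F 3 ⊗ₜ[F] (1 : PolyPart F) := dv_oi F 3

lemma fin4cases {P : Fin 4 → Prop} (h0 : P 0) (h1 : P 1) (h2 : P 2) (h3 : P 3) :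
    ∀ k, P k := by
  intro k; fin_cases k
  exacts [h0, h1, h2, h3]

lemma key01 :
    dv F (oi 0) * dv F (oi 1) * Bdd F = dv F (ei 3) * nu F 2 - dv F (ei 2) * nu F 3 := by
  simp only [nu, dv_oi, dv_ei, dv4, dv5, dv6, dv7, Bdd_eq, Fin.sum_univ_four,
      Algebra.TensorProduct.tmul_mul_tmul, one_mul, mul_one, mul_add, add_mul, mul_neg, neg_mul,
      aamul_neg, aaneg_mul, aaneg_neg, neg_neg, mul_assoc, gsq, gsq', g10, g20, g21, g30, g31, g32,
      g10', g20', g21', g30', g31', g32', zero_mul, mul_zero,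
      TensorProduct.zero_tmul, TensorProduct.neg_tmul, TensorProduct.tmul_neg,
      add_zero, zero_add, neg_zero, sub_neg_eq_add, sub_eq_add_neg, neg_add_rev]
  try abel

lemma nuk01 : ∀ k, dv F (oi 0) * dv F (oi 1) * nu F k = 0 := by
  refine fin4cases ?_ ?_ ?_ ?_ <;>
    simp only [nu, dv_oi, dv_ei, dv4, dv5, dv6, dv7, Bdd_eq, Fin.sum_univ_four,
      Algebra.TensorProduct.tmul_mul_tmul, one_mul, mul_one, mul_add, add_mul, mul_neg, neg_mul,
      aamul_neg, aaneg_mul, aaneg_neg, neg_neg, mul_assoc, gsq, gsq', g10, g20, g21, g30, g31, g32,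
      g10', g20', g21', g30', g31', g32', zero_mul, mul_zero,
      TensorProduct.zero_tmul, TensorProduct.neg_tmul, TensorProduct.tmul_neg,
      add_zero, zero_add, neg_zero, sub_neg_eq_add, sub_eq_add_neg, neg_add_rev]

lemma key02 :
    dv F (oi 0) * dv F (oi 2) * Bdd F = dv F (ei 1) * nu F 3 - dv F (ei 3) * nu F 1 := by
  simp only [nu, dv_oi, dv_ei, dv4, dv5, dv6, dv7, Bdd_eq, Fin.sum_univ_four,
      Algebra.TensorProduct.tmul_mul_tmul, one_mul, mul_one, mul_add, add_mul, mul_neg, neg_mul,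
      aamul_neg, aaneg_mul, aaneg_neg, neg_neg, mul_assoc, gsq, gsq', g10, g20, g21, g30, g31, g32,
      g10', g20', g21', g30', g31', g32', zero_mul, mul_zero,
      TensorProduct.zero_tmul, TensorProduct.neg_tmul, TensorProduct.tmul_neg,
      add_zero, zero_add, neg_zero, sub_neg_eq_add, sub_eq_add_neg, neg_add_rev]
  try abel

lemma nuk02 : ∀ k, dv F (oi 0) * dv F (oi 2) * nu F k = 0 := by
  refine fin4cases ?_ ?_ ?_ ?_ <;>
    simp only [nu, dv_oi, dv_ei, dv4, dv5, dv6, dv7, Bdd_eq, Fin.sum_univ_four,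
      Algebra.TensorProduct.tmul_mul_tmul, one_mul, mul_one, mul_add, add_mul, mul_neg, neg_mul,
      aamul_neg, aaneg_mul, aaneg_neg, neg_neg, mul_assoc, gsq, gsq', g10, g20, g21, g30, g31, g32,
      g10', g20', g21', g30', g31', g32', zero_mul, mul_zero,
      TensorProduct.zero_tmul, TensorProduct.neg_tmul, TensorProduct.tmul_neg,
      add_zero, zero_add, neg_zero, sub_neg_eq_add, sub_eq_add_neg, neg_add_rev]

lemma key03 :
    dv F (oi 0) * dv F (oi 3) * Bdd F = dv F (ei 2) * nu F 1 - dv F (ei 1) * nu F 2 := by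
  simp only [nu, dv_oi, dv_ei, dv4, dv5, dv6, dv7, Bdd_eq, Fin.sum_univ_four,
      Algebra.TensorProduct.tmul_mul_tmul, one_mul, mul_one, mul_add, add_mul, mul_neg, neg_mul,
      aamul_neg, aaneg_mul, aaneg_neg, neg_neg, mul_assoc, gsq, gsq', g10, g20, g21, g30, g31, g32,
      g10', g20', g21', g30', g31', g32', zero_mul, mul_zero,
      TensorProduct.zero_tmul, TensorProduct.neg_tmul, TensorProduct.tmul_neg,
      add_zero, zero_add, neg_zero, sub_neg_eq_add, sub_eq_add_neg, neg_add_rev]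
  try abel

lemma nuk03 : ∀ k, dv F (oi 0) * dv F (oi 3) * nu F k = 0 := by
  refine fin4cases ?_ ?_ ?_ ?_ <;>
    simp only [nu, dv_oi, dv_ei, dv4, dv5, dv6, dv7, Bdd_eq, Fin.sum_univ_four,
      Algebra.TensorProduct.tmul_mul_tmul, one_mul, mul_one, mul_add, add_mul, mul_neg, neg_mul,
      aamul_neg, aaneg_mul, aaneg_neg, neg_neg, mul_assoc, gsq, gsq', g10, g20, g21, g30, g31, g32,
      g10', g20', g21', g30', g31', g32', zero_mul, mul_zero,
      TensorProduct.zero_tmul, TensorProduct.neg_tmul, TensorProduct.tmul_neg,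
      add_zero, zero_add, neg_zero, sub_neg_eq_add, sub_eq_add_neg, neg_add_rev]

lemma key10 :
    dv F (oi 1) * dv F (oi 0) * Bdd F = dv F (ei 2) * nu F 3 - dv F (ei 3) * nu F 2 := by
  simp only [nu, dv_oi, dv_ei, dv4, dv5, dv6, dv7, Bdd_eq, Fin.sum_univ_four,
      Algebra.TensorProduct.tmul_mul_tmul, one_mul, mul_one, mul_add, add_mul, mul_neg, neg_mul,
      aamul_neg, aaneg_mul, aaneg_neg, neg_neg, mul_assoc, gsq, gsq', g10, g20, g21, g30, g31, g32,
      g10', g20', g21', g30', g31', g32', zero_mul, mul_zero,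
      TensorProduct.zero_tmul, TensorProduct.neg_tmul, TensorProduct.tmul_neg,
      add_zero, zero_add, neg_zero, sub_neg_eq_add, sub_eq_add_neg, neg_add_rev]
  try abel

lemma nuk10 : ∀ k, dv F (oi 1) * dv F (oi 0) * nu F k = 0 := by
  refine fin4cases ?_ ?_ ?_ ?_ <;>
    simp only [nu, dv_oi, dv_ei, dv4, dv5, dv6, dv7, Bdd_eq, Fin.sum_univ_four,
      Algebra.TensorProduct.tmul_mul_tmul, one_mul, mul_one, mul_add, add_mul, mul_neg, neg_mul,
      aamul_neg, aaneg_mul, aaneg_neg, neg_neg, mul_assoc, gsq, gsq', g10, g20, g21, g30, g31, g32,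
      g10', g20', g21', g30', g31', g32', zero_mul, mul_zero,
      TensorProduct.zero_tmul, TensorProduct.neg_tmul, TensorProduct.tmul_neg,
      add_zero, zero_add, neg_zero, sub_neg_eq_add, sub_eq_add_neg, neg_add_rev]

lemma key12 :
    dv F (oi 1) * dv F (oi 2) * Bdd F = dv F (ei 3) * nu F 0 - dv F (ei 0) * nu F 3 := by
  simp only [nu, dv_oi, dv_ei, dv4, dv5, dv6, dv7, Bdd_eq, Fin.sum_univ_four,
      Algebra.TensorProduct.tmul_mul_tmul, one_mul, mul_one, mul_add, add_mul, mul_neg, neg_mul,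
      aamul_neg, aaneg_mul, aaneg_neg, neg_neg, mul_assoc, gsq, gsq', g10, g20, g21, g30, g31, g32,
      g10', g20', g21', g30', g31', g32', zero_mul, mul_zero,
      TensorProduct.zero_tmul, TensorProduct.neg_tmul, TensorProduct.tmul_neg,
      add_zero, zero_add, neg_zero, sub_neg_eq_add, sub_eq_add_neg, neg_add_rev]
  try abel

lemma nuk12 : ∀ k, dv F (oi 1) * dv F (oi 2) * nu F k = 0 := by
  refine fin4cases ?_ ?_ ?_ ?_ <;>
    simp only [nu, dv_oi, dv_ei, dv4, dv5, dv6, dv7, Bdd_eq, Fin.sum_univ_four,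
      Algebra.TensorProduct.tmul_mul_tmul, one_mul, mul_one, mul_add, add_mul, mul_neg, neg_mul,
      aamul_neg, aaneg_mul, aaneg_neg, neg_neg, mul_assoc, gsq, gsq', g10, g20, g21, g30, g31, g32,
      g10', g20', g21', g30', g31', g32', zero_mul, mul_zero,
      TensorProduct.zero_tmul, TensorProduct.neg_tmul, TensorProduct.tmul_neg,
      add_zero, zero_add, neg_zero, sub_neg_eq_add, sub_eq_add_neg, neg_add_rev]

lemma key13 :
    dv F (oi 1) * dv F (oi 3) * Bdd F = dv F (ei 0) * nu F 2 - dv F (ei 2) * nu F 0 := by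
  simp only [nu, dv_oi, dv_ei, dv4, dv5, dv6, dv7, Bdd_eq, Fin.sum_univ_four,
      Algebra.TensorProduct.tmul_mul_tmul, one_mul, mul_one, mul_add, add_mul, mul_neg, neg_mul,
      aamul_neg, aaneg_mul, aaneg_neg, neg_neg, mul_assoc, gsq, gsq', g10, g20, g21, g30, g31, g32,
      g10', g20', g21', g30', g31', g32', zero_mul, mul_zero,
      TensorProduct.zero_tmul, TensorProduct.neg_tmul, TensorProduct.tmul_neg,
      add_zero, zero_add, neg_zero, sub_neg_eq_add, sub_eq_add_neg, neg_add_rev]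
  try abel

lemma nuk13 : ∀ k, dv F (oi 1) * dv F (oi 3) * nu F k = 0 := by
  refine fin4cases ?_ ?_ ?_ ?_ <;>
    simp only [nu, dv_oi, dv_ei, dv4, dv5, dv6, dv7, Bdd_eq, Fin.sum_univ_four,
      Algebra.TensorProduct.tmul_mul_tmul, one_mul, mul_one, mul_add, add_mul, mul_neg, neg_mul,
      aamul_neg, aaneg_mul, aaneg_neg, neg_neg, mul_assoc, gsq, gsq', g10, g20, g21, g30, g31, g32,
      g10', g20', g21', g30', g31', g32', zero_mul, mul_zero,
      TensorProduct.zero_tmul, TensorProduct.neg_tmul, TensorProduct.tmul_neg,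
      add_zero, zero_add, neg_zero, sub_neg_eq_add, sub_eq_add_neg, neg_add_rev]

lemma key20 :
    dv F (oi 2) * dv F (oi 0) * Bdd F = dv F (ei 3) * nu F 1 - dv F (ei 1) * nu F 3 := by
  simp only [nu, dv_oi, dv_ei, dv4, dv5, dv6, dv7, Bdd_eq, Fin.sum_univ_four,
      Algebra.TensorProduct.tmul_mul_tmul, one_mul, mul_one, mul_add, add_mul, mul_neg, neg_mul,
      aamul_neg, aaneg_mul, aaneg_neg, neg_neg, mul_assoc, gsq, gsq', g10, g20, g21, g30, g31, g32,
      g10', g20', g21', g30', g31', g32', zero_mul, mul_zero,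
      TensorProduct.zero_tmul, TensorProduct.neg_tmul, TensorProduct.tmul_neg,
      add_zero, zero_add, neg_zero, sub_neg_eq_add, sub_eq_add_neg, neg_add_rev]
  try abel

lemma nuk20 : ∀ k, dv F (oi 2) * dv F (oi 0) * nu F k = 0 := by
  refine fin4cases ?_ ?_ ?_ ?_ <;>
    simp only [nu, dv_oi, dv_ei, dv4, dv5, dv6, dv7, Bdd_eq, Fin.sum_univ_four,
      Algebra.TensorProduct.tmul_mul_tmul, one_mul, mul_one, mul_add, add_mul, mul_neg, neg_mul,
      aamul_neg, aaneg_mul, aaneg_neg, neg_neg, mul_assoc, gsq, gsq', g10, g20, g21, g30, g31, g32,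
      g10', g20', g21', g30', g31', g32', zero_mul, mul_zero,
      TensorProduct.zero_tmul, TensorProduct.neg_tmul, TensorProduct.tmul_neg,
      add_zero, zero_add, neg_zero, sub_neg_eq_add, sub_eq_add_neg, neg_add_rev]

lemma key21 :
    dv F (oi 2) * dv F (oi 1) * Bdd F = dv F (ei 0) * nu F 3 - dv F (ei 3) * nu F 0 := by
  simp only [nu, dv_oi, dv_ei, dv4, dv5, dv6, dv7, Bdd_eq, Fin.sum_univ_four,
      Algebra.TensorProduct.tmul_mul_tmul, one_mul, mul_one, mul_add, add_mul, mul_neg, neg_mul,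
      aamul_neg, aaneg_mul, aaneg_neg, neg_neg, mul_assoc, gsq, gsq', g10, g20, g21, g30, g31, g32,
      g10', g20', g21', g30', g31', g32', zero_mul, mul_zero,
      TensorProduct.zero_tmul, TensorProduct.neg_tmul, TensorProduct.tmul_neg,
      add_zero, zero_add, neg_zero, sub_neg_eq_add, sub_eq_add_neg, neg_add_rev]
  try abel

lemma nuk21 : ∀ k, dv F (oi 2) * dv F (oi 1) * nu F k = 0 := by
  refine fin4cases ?_ ?_ ?_ ?_ <;>
    simp only [nu, dv_oi, dv_ei, dv4, dv5, dv6, dv7, Bdd_eq, Fin.sum_univ_four,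
      Algebra.TensorProduct.tmul_mul_tmul, one_mul, mul_one, mul_add, add_mul, mul_neg, neg_mul,
      aamul_neg, aaneg_mul, aaneg_neg, neg_neg, mul_assoc, gsq, gsq', g10, g20, g21, g30, g31, g32,
      g10', g20', g21', g30', g31', g32', zero_mul, mul_zero,
      TensorProduct.zero_tmul, TensorProduct.neg_tmul, TensorProduct.tmul_neg,
      add_zero, zero_add, neg_zero, sub_neg_eq_add, sub_eq_add_neg, neg_add_rev]

lemma key23 :
    dv F (oi 2) * dv F (oi 3) * Bdd F = dv F (ei 1) * nu F 0 - dv F (ei 0) * nu F 1 := by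
  simp only [nu, dv_oi, dv_ei, dv4, dv5, dv6, dv7, Bdd_eq, Fin.sum_univ_four,
      Algebra.TensorProduct.tmul_mul_tmul, one_mul, mul_one, mul_add, add_mul, mul_neg, neg_mul,
      aamul_neg, aaneg_mul, aaneg_neg, neg_neg, mul_assoc, gsq, gsq', g10, g20, g21, g30, g31, g32,
      g10', g20', g21', g30', g31', g32', zero_mul, mul_zero,
      TensorProduct.zero_tmul, TensorProduct.neg_tmul, TensorProduct.tmul_neg,
      add_zero, zero_add, neg_zero, sub_neg_eq_add, sub_eq_add_neg, neg_add_rev]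
  try abel

lemma nuk23 : ∀ k, dv F (oi 2) * dv F (oi 3) * nu F k = 0 := by
  refine fin4cases ?_ ?_ ?_ ?_ <;>
    simp only [nu, dv_oi, dv_ei, dv4, dv5, dv6, dv7, Bdd_eq, Fin.sum_univ_four,
      Algebra.TensorProduct.tmul_mul_tmul, one_mul, mul_one, mul_add, add_mul, mul_neg, neg_mul,
      aamul_neg, aaneg_mul, aaneg_neg, neg_neg, mul_assoc, gsq, gsq', g10, g20, g21, g30, g31, g32,
      g10', g20', g21', g30', g31', g32', zero_mul, mul_zero,
      TensorProduct.zero_tmul, TensorProduct.neg_tmul, TensorProduct.tmul_neg,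
      add_zero, zero_add, neg_zero, sub_neg_eq_add, sub_eq_add_neg, neg_add_rev]

lemma key30 :
    dv F (oi 3) * dv F (oi 0) * Bdd F = dv F (ei 1) * nu F 2 - dv F (ei 2) * nu F 1 := by
  simp only [nu, dv_oi, dv_ei, dv4, dv5, dv6, dv7, Bdd_eq, Fin.sum_univ_four,
      Algebra.TensorProduct.tmul_mul_tmul, one_mul, mul_one, mul_add, add_mul, mul_neg, neg_mul,
      aamul_neg, aaneg_mul, aaneg_neg, neg_neg, mul_assoc, gsq, gsq', g10, g20, g21, g30, g31, g32,
      g10', g20', g21', g30', g31', g32', zero_mul, mul_zero,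
      TensorProduct.zero_tmul, TensorProduct.neg_tmul, TensorProduct.tmul_neg,
      add_zero, zero_add, neg_zero, sub_neg_eq_add, sub_eq_add_neg, neg_add_rev]
  try abel

lemma nuk30 : ∀ k, dv F (oi 3) * dv F (oi 0) * nu F k = 0 := by
  refine fin4cases ?_ ?_ ?_ ?_ <;>
    simp only [nu, dv_oi, dv_ei, dv4, dv5, dv6, dv7, Bdd_eq, Fin.sum_univ_four,
      Algebra.TensorProduct.tmul_mul_tmul, one_mul, mul_one, mul_add, add_mul, mul_neg, neg_mul,
      aamul_neg, aaneg_mul, aaneg_neg, neg_neg, mul_assoc, gsq, gsq', g10, g20, g21, g30, g31, g32,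
      g10', g20', g21', g30', g31', g32', zero_mul, mul_zero,
      TensorProduct.zero_tmul, TensorProduct.neg_tmul, TensorProduct.tmul_neg,
      add_zero, zero_add, neg_zero, sub_neg_eq_add, sub_eq_add_neg, neg_add_rev]

lemma key31 :
    dv F (oi 3) * dv F (oi 1) * Bdd F = dv F (ei 2) * nu F 0 - dv F (ei 0) * nu F 2 := by
  simp only [nu, dv_oi, dv_ei, dv4, dv5, dv6, dv7, Bdd_eq, Fin.sum_univ_four,
      Algebra.TensorProduct.tmul_mul_tmul, one_mul, mul_one, mul_add, add_mul, mul_neg, neg_mul,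
      aamul_neg, aaneg_mul, aaneg_neg, neg_neg, mul_assoc, gsq, gsq', g10, g20, g21, g30, g31, g32,
      g10', g20', g21', g30', g31', g32', zero_mul, mul_zero,
      TensorProduct.zero_tmul, TensorProduct.neg_tmul, TensorProduct.tmul_neg,
      add_zero, zero_add, neg_zero, sub_neg_eq_add, sub_eq_add_neg, neg_add_rev]
  try abel

lemma nuk31 : ∀ k, dv F (oi 3) * dv F (oi 1) * nu F k = 0 := by
  refine fin4cases ?_ ?_ ?_ ?_ <;>
    simp only [nu, dv_oi, dv_ei, dv4, dv5, dv6, dv7, Bdd_eq, Fin.sum_univ_four,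
      Algebra.TensorProduct.tmul_mul_tmul, one_mul, mul_one, mul_add, add_mul, mul_neg, neg_mul,
      aamul_neg, aaneg_mul, aaneg_neg, neg_neg, mul_assoc, gsq, gsq', g10, g20, g21, g30, g31, g32,
      g10', g20', g21', g30', g31', g32', zero_mul, mul_zero,
      TensorProduct.zero_tmul, TensorProduct.neg_tmul, TensorProduct.tmul_neg,
      add_zero, zero_add, neg_zero, sub_neg_eq_add, sub_eq_add_neg, neg_add_rev]

lemma key32 :
    dv F (oi 3) * dv F (oi 2) * Bdd F = dv F (ei 0) * nu F 1 - dv F (ei 1) * nu F 0 := by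
  simp only [nu, dv_oi, dv_ei, dv4, dv5, dv6, dv7, Bdd_eq, Fin.sum_univ_four,
      Algebra.TensorProduct.tmul_mul_tmul, one_mul, mul_one, mul_add, add_mul, mul_neg, neg_mul,
      aamul_neg, aaneg_mul, aaneg_neg, neg_neg, mul_assoc, gsq, gsq', g10, g20, g21, g30, g31, g32,
      g10', g20', g21', g30', g31', g32', zero_mul, mul_zero,
      TensorProduct.zero_tmul, TensorProduct.neg_tmul, TensorProduct.tmul_neg,
      add_zero, zero_add, neg_zero, sub_neg_eq_add, sub_eq_add_neg, neg_add_rev]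
  try abel

lemma nuk32 : ∀ k, dv F (oi 3) * dv F (oi 2) * nu F k = 0 := by
  refine fin4cases ?_ ?_ ?_ ?_ <;>
    simp only [nu, dv_oi, dv_ei, dv4, dv5, dv6, dv7, Bdd_eq, Fin.sum_univ_four,
      Algebra.TensorProduct.tmul_mul_tmul, one_mul, mul_one, mul_add, add_mul, mul_neg, neg_mul,
      aamul_neg, aaneg_mul, aaneg_neg, neg_neg, mul_assoc, gsq, gsq', g10, g20, g21, g30, g31, g32,
      g10', g20', g21', g30', g31', g32', zero_mul, mul_zero,
      TensorProduct.zero_tmul, TensorProduct.neg_tmul, TensorProduct.tmul_neg,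
      add_zero, zero_add, neg_zero, sub_neg_eq_add, sub_eq_add_neg, neg_add_rev]

lemma key (i j p q : Fin 4) (hij : i ≠ j) (hlc : lc i j p q = 1) :
    dv F (oi i) * dv F (oi j) * Bdd F = dv F (ei q) * nu F p - dv F (ei p) * nu F q := by
  fin_cases i <;> fin_cases j <;> fin_cases p <;> fin_cases q <;>
    first
      | exact absurd rfl hij
      | exact absurd hlc (by decide)
      | exact key01 F
      | exact key02 F
      | exact key03 F
      | exact key10 F
      | exact key12 F
      | exact key13 F
      | exact key20 F
      | exact key21 F
      | exact key23 F
      | exact key30 F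
      | exact key31 F
      | exact key32 F

lemma nuk (i j : Fin 4) (hij : i ≠ j) : ∀ k, dv F (oi i) * dv F (oi j) * nu F k = 0 := by
  fin_cases i <;> fin_cases j <;>
    first
      | exact absurd rfl hij
      | exact nuk01 F
      | exact nuk02 F
      | exact nuk03 F
      | exact nuk10 F
      | exact nuk12 F
      | exact nuk13 F
      | exact nuk20 F
      | exact nuk21 F
      | exact nuk23 F
      | exact nuk30 F
      | exact nuk31 F
      | exact nuk32 F

end AuxLemmas

/-- For `i,j ∈ {5,6,7,8}` with `i ≠ j`:
`2 ∂ᵢ αⱼ = ∂_p α_q − ∂_q α_p` where `p,q ∈ {1,2,3,4}` with `ε_{i−4,j−4,p,q} = 1`. -/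
theorem stmt5 (F : Type) [Field F] [CharZero F] :
    ∀ i j p q : Fin 4, i ≠ j → lc i j p q = 1 →
      (2 : ℤ) • (dv F (oi i) • alph F (oi j)) =
        dv F (ei p) • alph F (ei q) - dv F (ei q) • alph F (ei p) := by
  intro i j p q hij hlc
  have msmul : ∀ (x y : AA F) (v : MM F), x • y • v = (x * y) • v :=
    fun x y v => smul_smul x y v
  have msub : ∀ (x : AA F) (u v : MM F), x • (u - v) = x • u - x • v :=
    fun x u v => smul_sub x u v
  have madd : ∀ (x : AA F) (u v : MM F), x • (u + v) = x • u + x • v :=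
    fun x u v => smul_add x u v
  have mzero : ∀ v : MM F, (0 : AA F) • v = 0 := fun v => zero_smul (AA F) v
  have mzsub : ∀ u v : MM F, (2 : ℤ) • (u - v) = (2 : ℤ) • u - (2 : ℤ) • v :=
    fun u v => smul_sub _ u v
  have msubs : ∀ (x y : AA F) (v : MM F), (x - y) • v = x • v - y • v :=
    fun x y v => sub_smul x y v
  have mcomm : ∀ (x : AA F) (v : MM F), x • ((2 : ℤ) • v) = (2 : ℤ) • (x • v) := by
    intro x v
    funext m
    simp only [Pi.smul_apply, smul_eq_mul]
    exact mul_smul_comm _ _ _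
  have hpq : dv F (ei p) * dv F (ei q) = dv F (ei q) * dv F (ei p) := by
    rw [dv_ei, dv_ei, Algebra.TensorProduct.tmul_mul_tmul,
      Algebra.TensorProduct.tmul_mul_tmul]
    exact congrArg₂ (fun (t : ExtPart F) (u : PolyPart F) => t ⊗ₜ[F] u)
      rfl (mul_comm _ _)
  have hBnua : (dv F (oi i) * dv F (oi j)) • Bnua F = 0 := by
    rw [Bnua, Finset.smul_sum]
    refine Finset.sum_eq_zero fun k _ => ?_
    rw [msmul, nuk F i j hij k, mzero]
  have e1 : dv F (oi i) • alph F (oi j) =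
      (dv F (oi i) * dv F (oi j) * Bdd F) • Cda F := by
    rw [alph, nu8_oi, mzero, smul_zero, sub_zero, madd, msmul, msmul,
      hBnua, add_zero, mul_assoc]
  have e2 : ∀ a b : Fin 4, dv F (ei a) • alph F (ei b) =
      (dv F (ei a) * dv F (ei b) * Bdd F) • Cda F
        - (2 : ℤ) • ((dv F (ei a) * nu F b) • Cda F)
        + (dv F (ei a) * dv F (ei b)) • Bnua F := by
    intro a b
    rw [alph, nu8_ei, madd, msub, msmul, mcomm, msmul, msmul, mul_assoc]
  rw [e1, e2, e2, key F i j p q hij hlc, ← hpq, msubs, mzsub]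
  abel
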